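/- arXiv:2001.08655 — 6 statements merged into one kernel-verified Lean document; each statement's English description precedes it below -/
import Mathlib

section
/- Let X be a nonnegative random variable that is almost surely bounded, and suppose E[X^2] ≤ v^2 for some v ≥ 0. Then for every λ ≤ 0, E[exp(λ(X − E[X]))] ≤ exp(v^2 λ^2 / 2); that is, X is v-left-sided-sub-Gaussian. -/
/-!
For `t ≤ 0` the exponential lies below its second Taylor polynomial, `exp t ≤ 1 + t + t² / 2`.
Applied to `t = λ X` with `λ ≤ 0 ≤ X` and integrated, this gives
`E[exp (λ X)] ≤ 1 + λ E[X] + λ² E[X²] / 2 ≤ exp (λ E[X] + v² λ² / 2)`,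
and the factor `exp (λ E[X])` is exactly what centring removes.
-/

open MeasureTheory ProbabilityTheory Real

theorem Real.exp_le_one_add_add_sq_div_two {x : ℝ} (hx : x ≤ 0) :
    exp x ≤ 1 + x + x ^ 2 / 2 := by
  have hderiv (y : ℝ) :
      HasDerivAt (fun y => 1 + y + y ^ 2 / 2 - exp y) (1 + y - exp y) y := by
    refine ((((hasDerivAt_id y).const_add 1).add ((hasDerivAt_pow 2 y).div_const 2)).sub
      (hasDerivAt_exp y)).congr_deriv ?_
    norm_num
  have hanti : AntitoneOn (fun y => 1 + y + y ^ 2 / 2 - exp y) (Set.Iic 0) :=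
    antitoneOn_of_hasDerivWithinAt_nonpos (convex_Iic 0) (by fun_prop)
      (fun y _ => (hderiv y).hasDerivWithinAt) (fun y _ => by linarith [add_one_le_exp y])
  simpa using hanti hx Set.self_mem_Iic hx

section Moments

variable {Ω : Type*} [MeasurableSpace Ω] {P : Measure Ω} [IsProbabilityMeasure P]
  {X : Ω → ℝ} {t : ℝ}

theorem mgf_le_one_add_of_nonneg_of_nonpos (h0 : ∀ᵐ ω ∂P, 0 ≤ X ω) (hX : MemLp X 2 P)
    (ht : t ≤ 0) :
    mgf X P t ≤ 1 + t * ∫ ω, X ω ∂P + t ^ 2 * (∫ ω, X ω ^ 2 ∂P) / 2 := by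
  have hXi : Integrable X P := hX.integrable one_le_two
  have hexp : Integrable (fun ω => exp (t * X ω)) P := by
    refine .of_bound (by fun_prop) 1 ?_
    filter_upwards [h0] with ω hω
    rw [norm_of_nonneg (exp_nonneg _), exp_le_one_iff]
    exact mul_nonpos_of_nonpos_of_nonneg ht hω
  have hlin : Integrable (fun ω => 1 + t * X ω) P := (integrable_const 1).add (hXi.const_mul t)
  have hquad : Integrable (fun ω => t ^ 2 * X ω ^ 2 / 2) P :=
    (hX.integrable_sq.const_mul _).div_const 2
  calc mgf X P t ≤ ∫ ω, (1 + t * X ω + t ^ 2 * X ω ^ 2 / 2) ∂P := by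
        refine integral_mono_ae hexp (hlin.add hquad) ?_
        filter_upwards [h0] with ω hω
        exact (exp_le_one_add_add_sq_div_two (mul_nonpos_of_nonpos_of_nonneg ht hω)).trans_eq
          (by ring)
    _ = 1 + t * ∫ ω, X ω ∂P + t ^ 2 * (∫ ω, X ω ^ 2 ∂P) / 2 := by
        rw [integral_add hlin hquad, integral_add (integrable_const 1) (hXi.const_mul t),
          integral_div, integral_const_mul, integral_const_mul]
        simp

theorem mgf_sub_integral_le_of_nonneg_of_nonpos {s : ℝ} (h0 : ∀ᵐ ω ∂P, 0 ≤ X ω)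
    (hX : MemLp X 2 P) (h2 : ∫ ω, X ω ^ 2 ∂P ≤ s) (ht : t ≤ 0) :
    mgf (fun ω => X ω - ∫ ω', X ω' ∂P) P t ≤ exp (s * t ^ 2 / 2) := by
  have hmgf : mgf X P t ≤ exp (t * ∫ ω, X ω ∂P + s * t ^ 2 / 2) := by
    calc mgf X P t ≤ 1 + t * ∫ ω, X ω ∂P + t ^ 2 * (∫ ω, X ω ^ 2 ∂P) / 2 :=
          mgf_le_one_add_of_nonneg_of_nonpos h0 hX ht
      _ ≤ (t * ∫ ω, X ω ∂P + s * t ^ 2 / 2) + 1 := by nlinarith [sq_nonneg t]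
      _ ≤ exp (t * ∫ ω, X ω ∂P + s * t ^ 2 / 2) := add_one_le_exp _
  simp_rw [sub_eq_add_neg, mgf_add_const]
  calc mgf X P t * exp (t * -∫ ω, X ω ∂P)
      ≤ exp (t * ∫ ω, X ω ∂P + s * t ^ 2 / 2) * exp (t * -∫ ω, X ω ∂P) := by gcongr
    _ = exp (s * t ^ 2 / 2) := by rw [← exp_add]; ring_nf

end Moments

theorem lsg_of_second_moment_general {Ω : Type*} [MeasurableSpace Ω] (P : Measure Ω)
    [IsProbabilityMeasure P] (X : Ω → ℝ) (hX : Measurable X)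
    (M : ℝ) (h0 : ∀ᵐ ω ∂P, 0 ≤ X ω) (hb : ∀ᵐ ω ∂P, X ω ≤ M)
    (v : ℝ) (h2 : ∫ ω, (X ω) ^ 2 ∂P ≤ v ^ 2) :
    ∀ l : ℝ, l ≤ 0 →
      ∫ ω, Real.exp (l * (X ω - ∫ ω', X ω' ∂P)) ∂P ≤ Real.exp (v ^ 2 * l ^ 2 / 2) := by
  intro l hl
  have hX2 : MemLp X 2 P := by
    refine .of_bound hX.aestronglyMeasurable M ?_
    filter_upwards [h0, hb] with ω hω hωM
    rwa [norm_of_nonneg hω]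
  exact mgf_sub_integral_le_of_nonneg_of_nonpos h0 hX2 h2 hl

/-- A nonnegative, a.s.-bounded random variable with `E[X^2] ≤ v^2`
is `v`-left-sided-sub-Gaussian. -/
theorem lsg_of_second_moment {Ω : Type*} [MeasurableSpace Ω] (P : Measure Ω)
    [IsProbabilityMeasure P] (X : Ω → ℝ) (hX : Measurable X)
    (M : ℝ) (hM : 0 < M) (h0 : ∀ᵐ ω ∂P, 0 ≤ X ω) (hb : ∀ᵐ ω ∂P, X ω ≤ M)
    (v : ℝ) (hv : 0 ≤ v) (h2 : ∫ ω, (X ω) ^ 2 ∂P ≤ v ^ 2) :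
    ∀ l : ℝ, l ≤ 0 →
      ∫ ω, Real.exp (l * (X ω - ∫ ω', X ω' ∂P)) ∂P ≤ Real.exp (v ^ 2 * l ^ 2 / 2) :=
  lsg_of_second_moment_general P X hX M h0 hb v h2
end

section
/- For any random variable X with 0 ≤ X ≤ M almost surely and any λ ∈ ℝ, the symmetrization identity holds: E[X^2 e^{λX}]·E[X e^{λX}] − E[X^3 e^{λX}]·E[e^{λX}] = −(1/2) ∫∫ e^{λx+λy}(x−y)^2(x+y) dμ(x)dμ(y) ≤ 0, where μ is the law of X. -/
open MeasureTheory Real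

lemma aux_integrable {μ : Measure ℝ} [IsProbabilityMeasure μ] (M : ℝ)
    (hμ : ∀ᵐ x ∂μ, 0 ≤ x ∧ x ≤ M) (k : ℕ) (l : ℝ) :
    Integrable (fun x => x ^ k * Real.exp (l * x)) μ := by
  apply Integrable.mono' (integrable_const (M ^ k * Real.exp (|l| * M)))
  · exact ((measurable_id.pow_const k).mul ((measurable_const.mul measurable_id).exp)).aestronglyMeasurable
  · filter_upwards [hμ] with x hx
    rw [Real.norm_eq_abs, abs_mul, abs_of_nonneg (Real.exp_nonneg _), abs_pow,
      abs_of_nonneg hx.1]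
    have h1 : x ^ k ≤ M ^ k := pow_le_pow_left₀ hx.1 hx.2 k
    have h2 : Real.exp (l * x) ≤ Real.exp (|l| * M) := by
      apply Real.exp_le_exp.2
      calc l * x ≤ |l * x| := le_abs_self _
        _ = |l| * |x| := abs_mul _ _
        _ ≤ |l| * M := by
            apply mul_le_mul_of_nonneg_left _ (abs_nonneg l)
            rw [abs_of_nonneg hx.1]; exact hx.2
    exact mul_le_mul h1 h2 (Real.exp_nonneg _) (pow_nonneg (hx.1.trans hx.2) k)

/-- Symmetrization identity for a bounded nonnegative random variable:
`E[X^2 e^{λX}]·E[X e^{λX}] − E[X^3 e^{λX}]·E[e^{λX}]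
  = −(1/2) ∫∫ e^{λx+λy}(x−y)^2(x+y) dμ(x)dμ(y) ≤ 0`, where `μ` is the law of `X`. -/
theorem symmetrization_identity {Ω : Type*} [MeasurableSpace Ω] (P : Measure Ω)
    [IsProbabilityMeasure P] (X : Ω → ℝ) (hX : Measurable X)
    (M : ℝ) (hM : 0 < M) (h0 : ∀ᵐ ω ∂P, 0 ≤ X ω) (hb : ∀ᵐ ω ∂P, X ω ≤ M) (l : ℝ) :
    (∫ ω, (X ω) ^ 2 * Real.exp (l * X ω) ∂P) * (∫ ω, X ω * Real.exp (l * X ω) ∂P) -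
        (∫ ω, (X ω) ^ 3 * Real.exp (l * X ω) ∂P) * (∫ ω, Real.exp (l * X ω) ∂P) =
      -(1 / 2) * ∫ p, Real.exp (l * p.1 + l * p.2) * (p.1 - p.2) ^ 2 * (p.1 + p.2)
        ∂((P.map X).prod (P.map X)) ∧
    (∫ ω, (X ω) ^ 2 * Real.exp (l * X ω) ∂P) * (∫ ω, X ω * Real.exp (l * X ω) ∂P) -
        (∫ ω, (X ω) ^ 3 * Real.exp (l * X ω) ∂P) * (∫ ω, Real.exp (l * X ω) ∂P) ≤ 0 := by
  set μ := P.map X with hμdef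
  have hprob : IsProbabilityMeasure μ := Measure.isProbabilityMeasure_map hX.aemeasurable
  have hbound : ∀ᵐ x ∂μ, 0 ≤ x ∧ x ≤ M := by
    rw [hμdef, ae_map_iff hX.aemeasurable]
    · filter_upwards [h0, hb] with ω h1 h2 using ⟨h1, h2⟩
    · exact (measurableSet_Icc : MeasurableSet (Set.Icc (0:ℝ) M))
  have hint : ∀ k : ℕ, Integrable (fun x => x ^ k * Real.exp (l * x)) μ :=
    fun k => aux_integrable M hbound k l
  have hmap : ∀ k : ℕ, (∫ ω, (X ω) ^ k * Real.exp (l * X ω) ∂P)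
      = ∫ x, x ^ k * Real.exp (l * x) ∂μ := by
    intro k
    rw [hμdef, integral_map hX.aemeasurable]
    exact ((measurable_id.pow_const k).mul
      ((measurable_const.mul measurable_id).exp)).aestronglyMeasurable
  set A : ℕ → ℝ := fun k => ∫ x, x ^ k * Real.exp (l * x) ∂μ with hA
  have key : (∫ p, Real.exp (l * p.1 + l * p.2) * (p.1 - p.2) ^ 2 * (p.1 + p.2)
      ∂(μ.prod μ)) = 2 * (A 3 * A 0 - A 2 * A 1) := by
    have heq : ∀ p : ℝ × ℝ,
        Real.exp (l * p.1 + l * p.2) * (p.1 - p.2) ^ 2 * (p.1 + p.2)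
        = (p.1 ^ 3 * Real.exp (l * p.1)) * (p.2 ^ 0 * Real.exp (l * p.2))
          + (p.1 ^ 0 * Real.exp (l * p.1)) * (p.2 ^ 3 * Real.exp (l * p.2))
          - (p.1 ^ 2 * Real.exp (l * p.1)) * (p.2 ^ 1 * Real.exp (l * p.2))
          - (p.1 ^ 1 * Real.exp (l * p.1)) * (p.2 ^ 2 * Real.exp (l * p.2)) := by
      intro p
      rw [Real.exp_add]
      ring
    rw [integral_congr_ae (Filter.Eventually.of_forall heq)]
    have I30 := (hint 3).mul_prod (hint 0)
    have I03 := (hint 0).mul_prod (hint 3)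
    have I21 := (hint 2).mul_prod (hint 1)
    have I12 := (hint 1).mul_prod (hint 2)
    have e1 : (∫ p : ℝ × ℝ, ((p.1 ^ 3 * Real.exp (l * p.1)) * (p.2 ^ 0 * Real.exp (l * p.2))
          + (p.1 ^ 0 * Real.exp (l * p.1)) * (p.2 ^ 3 * Real.exp (l * p.2))
          - (p.1 ^ 2 * Real.exp (l * p.1)) * (p.2 ^ 1 * Real.exp (l * p.2))
          - (p.1 ^ 1 * Real.exp (l * p.1)) * (p.2 ^ 2 * Real.exp (l * p.2))) ∂(μ.prod μ))
        = (∫ p : ℝ × ℝ, (p.1 ^ 3 * Real.exp (l * p.1)) * (p.2 ^ 0 * Real.exp (l * p.2)) ∂(μ.prod μ))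
          + (∫ p : ℝ × ℝ, (p.1 ^ 0 * Real.exp (l * p.1)) * (p.2 ^ 3 * Real.exp (l * p.2)) ∂(μ.prod μ))
          - (∫ p : ℝ × ℝ, (p.1 ^ 2 * Real.exp (l * p.1)) * (p.2 ^ 1 * Real.exp (l * p.2)) ∂(μ.prod μ))
          - (∫ p : ℝ × ℝ, (p.1 ^ 1 * Real.exp (l * p.1)) * (p.2 ^ 2 * Real.exp (l * p.2)) ∂(μ.prod μ)) := by
      have J2 : Integrable (fun p : ℝ × ℝ => (p.1 ^ 3 * Real.exp (l * p.1)) * (p.2 ^ 0 * Real.exp (l * p.2))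
          + (p.1 ^ 0 * Real.exp (l * p.1)) * (p.2 ^ 3 * Real.exp (l * p.2))) (μ.prod μ) := I30.add I03
      have J1 : Integrable (fun p : ℝ × ℝ => (p.1 ^ 3 * Real.exp (l * p.1)) * (p.2 ^ 0 * Real.exp (l * p.2))
          + (p.1 ^ 0 * Real.exp (l * p.1)) * (p.2 ^ 3 * Real.exp (l * p.2))
          - (p.1 ^ 2 * Real.exp (l * p.1)) * (p.2 ^ 1 * Real.exp (l * p.2))) (μ.prod μ) := J2.sub I21
      rw [integral_sub J1 I12, integral_sub J2 I21, integral_add I30 I03]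
    rw [e1,
      integral_prod_mul (f := fun x : ℝ => x ^ 3 * Real.exp (l * x)) (g := fun x : ℝ => x ^ 0 * Real.exp (l * x)),
      integral_prod_mul (f := fun x : ℝ => x ^ 0 * Real.exp (l * x)) (g := fun x : ℝ => x ^ 3 * Real.exp (l * x)),
      integral_prod_mul (f := fun x : ℝ => x ^ 2 * Real.exp (l * x)) (g := fun x : ℝ => x ^ 1 * Real.exp (l * x)),
      integral_prod_mul (f := fun x : ℝ => x ^ 1 * Real.exp (l * x)) (g := fun x : ℝ => x ^ 2 * Real.exp (l * x))]
    simp only [hA]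
    ring
  have hnonneg : 0 ≤ ∫ p, Real.exp (l * p.1 + l * p.2) * (p.1 - p.2) ^ 2 * (p.1 + p.2)
      ∂(μ.prod μ) := by
    apply integral_nonneg_of_ae
    have h1 : ∀ᵐ p ∂(μ.prod μ), 0 ≤ p.1 ∧ p.1 ≤ M := by
      rw [Measure.ae_prod_iff_ae_ae]
      · exact hbound.mono fun x hx => Filter.Eventually.of_forall fun y => hx
      · exact (measurableSet_Icc : MeasurableSet (Set.Icc (0:ℝ) M)).preimage measurable_fst
    have h2 : ∀ᵐ p ∂(μ.prod μ), 0 ≤ p.2 ∧ p.2 ≤ M := by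
      rw [Measure.ae_prod_iff_ae_ae]
      · exact Filter.Eventually.of_forall fun x => hbound.mono fun y hy => hy
      · exact (measurableSet_Icc : MeasurableSet (Set.Icc (0:ℝ) M)).preimage measurable_snd
    filter_upwards [h1, h2] with p hp1 hp2
    exact mul_nonneg (mul_nonneg (Real.exp_nonneg _) (sq_nonneg _)) (add_nonneg hp1.1 hp2.1)
  have hA1 : (∫ ω, X ω * Real.exp (l * X ω) ∂P) = A 1 := by
    simp only [hA]; rw [← hmap 1]; simp [pow_one]
  have hA0 : (∫ ω, Real.exp (l * X ω) ∂P) = A 0 := by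
    simp only [hA]; rw [← hmap 0]; simp
  have hA2 : (∫ ω, (X ω) ^ 2 * Real.exp (l * X ω) ∂P) = A 2 := hmap 2
  have hA3 : (∫ ω, (X ω) ^ 3 * Real.exp (l * X ω) ∂P) = A 3 := hmap 3
  constructor
  · rw [hA1, hA0, hA2, hA3, key]; ring
  · rw [hA1, hA0, hA2, hA3]
    nlinarith [hnonneg, key]
end

section
/- For every w ∈ (0, 1] and every natural number k ≥ 1, (1 − (1−w)^k)/w ≥ min{k/2, 1/(2w)}. -/
/-!
Multiplying Bernoulli's inequality `1 + k w ≤ (1 + w)^k` by `(1 - w)^k` gives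
`(1 - w)^k (1 + k w) ≤ (1 - w²)^k ≤ 1`, hence `(1 - (1 - w)^k) / w ≥ k / (1 + k w)`.
Finally `1 + k w ≤ 2 max 1 (k w)`, so `k / (1 + k w) ≥ min (k / 2) (1 / (2 w))`.
-/

theorem one_sub_pow_mul_one_add_mul_le_one {w : ℝ} (h₀ : -1 ≤ w) (h₁ : w ≤ 1) (k : ℕ) :
    (1 - w) ^ k * (1 + k * w) ≤ 1 :=
  calc (1 - w) ^ k * (1 + k * w) ≤ (1 - w) ^ k * (1 + w) ^ k :=
        mul_le_mul_of_nonneg_left (one_add_mul_le_pow (by linarith) k)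
          (pow_nonneg (by linarith) k)
    _ = (1 - w ^ 2) ^ k := by rw [← mul_pow]; ring
    _ ≤ 1 := pow_le_one₀ (by nlinarith) (by nlinarith)

theorem div_one_add_mul_le_one_sub_pow_div {w : ℝ} (h₀ : 0 < w) (h₁ : w ≤ 1) (k : ℕ) :
    k / (1 + k * w) ≤ (1 - (1 - w) ^ k) / w := by
  have key := one_sub_pow_mul_one_add_mul_le_one (by linarith) h₁ k
  rw [div_le_div_iff₀ (by positivity) h₀]
  linarith

theorem min_half_le_div_one_add_mul {k w : ℝ} (hk : 0 ≤ k) (hw : 0 < w) :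
    min (k / 2) (1 / (2 * w)) ≤ k / (1 + k * w) := by
  rcases le_total (k * w) 1 with h | h
  · calc min (k / 2) (1 / (2 * w)) ≤ k / 2 := min_le_left _ _
      _ ≤ k / (1 + k * w) := div_le_div_of_nonneg_left hk (by positivity) (by linarith)
  · calc min (k / 2) (1 / (2 * w)) ≤ 1 / (2 * w) := min_le_right _ _
      _ = k / (2 * (k * w)) := by field_simp [(by nlinarith : k ≠ 0)]
      _ ≤ k / (1 + k * w) := div_le_div_of_nonneg_left hk (by positivity) (by linarith)

theorem cascade_mean_lower_bound_general (w : ℝ) (hw0 : 0 < w) (hw1 : w ≤ 1) (k : ℕ) :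
    min ((k : ℝ) / 2) (1 / (2 * w)) ≤ (1 - (1 - w) ^ k) / w :=
  (min_half_le_div_one_add_mul k.cast_nonneg hw0).trans
    (div_one_add_mul_le_one_sub_pow_div hw0 hw1 k)

/-- For `w ∈ (0,1]` and `k ≥ 1`, `(1 − (1−w)^k)/w ≥ min{k/2, 1/(2w)}`. -/
theorem cascade_mean_lower_bound (w : ℝ) (hw0 : 0 < w) (hw1 : w ≤ 1) (k : ℕ) (hk : 1 ≤ k) :
    min ((k : ℝ) / 2) (1 / (2 * w)) ≤ (1 - (1 - w) ^ k) / w :=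
  cascade_mean_lower_bound_general w hw0 hw1 k
end

section
/- Let u_1 ≥ ... ≥ u_k be weights in [0,1], and define μ_k(u, I) as the expected number of examined items under ordering I in the cascade model. Then for every permutation I, μ_k(u, I_dec) ≤ μ_k(u, I) ≤ μ_k(u, I_inc), where I_dec = (1, 2, ..., k) pulls items in decreasing weight order and I_inc = (k, k−1, ..., 1) pulls them in increasing weight order. -/
/-- Expected number of examined items in a cascade where the item pulled at position
`i ∈ {1,...,k}` has click probability `a i`. -/
noncomputable def cascadeMean (k : ℕ) (a : ℕ → ℝ) : ℝ :=
  (∑ i ∈ Finset.Icc 1 (k - 1), (i : ℝ) * a i * ∏ j ∈ Finset.Icc 1 (i - 1), (1 - a j)) +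
    (k : ℝ) * ∏ j ∈ Finset.Icc 1 (k - 1), (1 - a j)

lemma cascadeMean_eq (n : ℕ) (a : ℕ → ℝ) :
    cascadeMean (n + 1) a
      = ∑ i ∈ Finset.range (n + 1), ∏ j ∈ Finset.Icc 1 i, (1 - a j) := by
  induction n with
  | zero => simp [cascadeMean]
  | succ n ih =>
      rw [Finset.sum_range_succ, ← ih]
      unfold cascadeMean
      simp only [Nat.add_sub_cancel]
      rw [Finset.sum_Icc_succ_top (by omega), Finset.prod_Icc_succ_top (by omega)]
      simp only [Nat.add_sub_cancel]
      push_cast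
      ring

lemma prod_le_prod_sep (v : ℕ → ℝ) (S T : Finset ℕ)
    (hcard : S.card = T.card) (h0 : ∀ m ∈ S ∪ T, 0 ≤ v m)
    (c : ℝ) (hc : 0 ≤ c)
    (hSc : ∀ a ∈ S \ T, v a ≤ c) (hTc : ∀ b ∈ T \ S, c ≤ v b) :
    ∏ m ∈ S, v m ≤ ∏ m ∈ T, v m := by
  have h0S : ∀ m ∈ S \ T, 0 ≤ v m := fun m hm =>
    h0 m (Finset.mem_union_left _ (Finset.sdiff_subset hm))
  have h0I : ∀ m ∈ S ∩ T, 0 ≤ v m := fun m hm =>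
    h0 m (Finset.mem_union_left _ (Finset.inter_subset_left hm))
  have hcard' : (S \ T).card = (T \ S).card := by
    have h1 : (S \ T).card + (S ∩ T).card = S.card := Finset.card_sdiff_add_card_inter S T
    have h2 : (T \ S).card + (T ∩ S).card = T.card := Finset.card_sdiff_add_card_inter T S
    rw [Finset.inter_comm T S] at h2
    omega
  have hS1 : (∏ m ∈ S \ T, v m) * ∏ m ∈ S ∩ T, v m = ∏ m ∈ S, v m := by
    rw [← Finset.sdiff_inter_self_left S T]
    exact Finset.prod_sdiff Finset.inter_subset_left
  have hT1 : (∏ m ∈ T \ S, v m) * ∏ m ∈ S ∩ T, v m = ∏ m ∈ T, v m := by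
    rw [Finset.inter_comm, ← Finset.sdiff_inter_self_left T S]
    exact Finset.prod_sdiff Finset.inter_subset_left
  rw [← hS1, ← hT1]
  apply mul_le_mul_of_nonneg_right _ (Finset.prod_nonneg h0I)
  calc ∏ m ∈ S \ T, v m ≤ ∏ m ∈ S \ T, c := Finset.prod_le_prod h0S hSc
    _ = c ^ (S \ T).card := by rw [Finset.prod_const]
    _ = c ^ (T \ S).card := by rw [hcard']
    _ = ∏ m ∈ T \ S, c := by rw [Finset.prod_const]
    _ ≤ ∏ m ∈ T \ S, v m := Finset.prod_le_prod (fun _ _ => hc) hTc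

lemma key_bounds (k : ℕ) (v : ℕ → ℝ) (h0 : ∀ m ∈ Finset.Icc 1 k, 0 ≤ v m ∧ v m ≤ 1)
    (hm : ∀ p q, 1 ≤ p → p ≤ q → q ≤ k → v p ≤ v q)
    {i : ℕ} (hik : i ≤ k)
    {S : Finset ℕ} (hS : S ⊆ Finset.Icc 1 k) (hcard : S.card = i) :
    ((∏ j ∈ Finset.Icc 1 i, v j) ≤ ∏ m ∈ S, v m) ∧
      ((∏ m ∈ S, v m) ≤ ∏ m ∈ Finset.Icc (k + 1 - i) k, v m) := by
  rcases Nat.eq_zero_or_pos i with rfl | hi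
  · have hS0 : S = ∅ := Finset.card_eq_zero.mp hcard
    subst hS0
    have : Finset.Icc (k + 1 - 0) k = (∅ : Finset ℕ) := by
      apply Finset.Icc_eq_empty; omega
    simp [this]
  have hmemS : ∀ m ∈ S, 1 ≤ m ∧ m ≤ k := by
    intro m hmS
    have := hS hmS
    rw [Finset.mem_Icc] at this
    exact this
  constructor
  · apply prod_le_prod_sep v (Finset.Icc 1 i) S _ _ (v i)
    · exact (h0 i (Finset.mem_Icc.mpr ⟨hi, hik⟩)).1
    · intro a ha
      rw [Finset.mem_sdiff, Finset.mem_Icc] at ha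
      exact hm a i ha.1.1 ha.1.2 hik
    · intro b hb
      rw [Finset.mem_sdiff, Finset.mem_Icc] at hb
      obtain ⟨hbS, hbn⟩ := hb
      have hb1 := hmemS b hbS
      exact hm i b hi (by omega) hb1.2
    · rw [Nat.card_Icc, hcard]; omega
    · intro m hmu
      rcases Finset.mem_union.mp hmu with h | h
      · rw [Finset.mem_Icc] at h
        exact (h0 m (Finset.mem_Icc.mpr ⟨h.1, le_trans h.2 hik⟩)).1
      · exact (h0 m (hS h)).1
  · apply prod_le_prod_sep v S (Finset.Icc (k + 1 - i) k) _ _ (v (k + 1 - i))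
    · exact (h0 (k + 1 - i) (Finset.mem_Icc.mpr ⟨by omega, by omega⟩)).1
    · intro a ha
      rw [Finset.mem_sdiff, Finset.mem_Icc] at ha
      obtain ⟨haS, han⟩ := ha
      have ha1 := hmemS a haS
      exact hm a (k + 1 - i) ha1.1 (by omega) (by omega)
    · intro b hb
      rw [Finset.mem_sdiff, Finset.mem_Icc] at hb
      exact hm (k + 1 - i) b (by omega) hb.1.1 hb.1.2
    · rw [Nat.card_Icc, hcard]; omega
    · intro m hmu
      rcases Finset.mem_union.mp hmu with h | h
      · exact (h0 m (hS h)).1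
      · rw [Finset.mem_Icc] at h
        exact (h0 m (Finset.mem_Icc.mpr ⟨by omega, h.2⟩)).1

/-- With weights `u 1 ≥ u 2 ≥ ... ≥ u k` in `[0,1]`, for any ordering `I`
(a bijection of `{1,...,k}` onto itself), the expected number of examined items is
minimized by the decreasing order (identity) and maximized by the increasing order
(`i ↦ k+1−i`). -/
theorem cascadeMean_order_bounds (k : ℕ) (hk : 1 ≤ k) (u : ℕ → ℝ)
    (hu : ∀ i ∈ Finset.Icc 1 k, 0 ≤ u i ∧ u i ≤ 1)
    (hmono : ∀ i j, 1 ≤ i → i ≤ j → j ≤ k → u j ≤ u i)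
    (I : ℕ → ℕ) (hI : Set.BijOn I (Set.Icc 1 k) (Set.Icc 1 k)) :
    cascadeMean k u ≤ cascadeMean k (fun i => u (I i)) ∧
      cascadeMean k (fun i => u (I i)) ≤ cascadeMean k (fun i => u (k + 1 - i)) := by
  obtain ⟨n, rfl⟩ : ∃ n, k = n + 1 := ⟨k - 1, by omega⟩
  set v : ℕ → ℝ := fun m => 1 - u m with hv
  have h0 : ∀ m ∈ Finset.Icc 1 (n + 1), 0 ≤ v m ∧ v m ≤ 1 := by
    intro m hmk
    have := hu m hmk
    constructor <;> simp [hv] <;> linarith [this.1, this.2]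
  have hmv : ∀ p q, 1 ≤ p → p ≤ q → q ≤ n + 1 → v p ≤ v q := by
    intro p q h1 h2 h3
    have := hmono p q h1 h2 h3
    simp [hv]; linarith
  -- per-prefix facts
  have hkey : ∀ i ∈ Finset.range (n + 1),
      ((∏ j ∈ Finset.Icc 1 i, v j) ≤ ∏ j ∈ Finset.Icc 1 i, v (I j)) ∧
        ((∏ j ∈ Finset.Icc 1 i, v (I j)) ≤ ∏ j ∈ Finset.Icc 1 i, v (n + 1 + 1 - j)) := by
    intro i hi
    rw [Finset.mem_range] at hi
    have hik : i ≤ n + 1 := by omega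
    have hsub : ∀ j ∈ Finset.Icc 1 i, j ∈ Set.Icc 1 (n + 1) := by
      intro j hj
      rw [Finset.mem_Icc] at hj
      exact Set.mem_Icc.mpr ⟨hj.1, le_trans hj.2 hik⟩
    have hinj : ∀ x ∈ Finset.Icc 1 i, ∀ y ∈ Finset.Icc 1 i, I x = I y → x = y := by
      intro x hx y hy hxy
      exact hI.injOn (hsub x hx) (hsub y hy) hxy
    have himg : ∏ j ∈ Finset.Icc 1 i, v (I j) = ∏ m ∈ (Finset.Icc 1 i).image I, v m :=
      (Finset.prod_image hinj).symm
    have hScard : ((Finset.Icc 1 i).image I).card = i := by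
      rw [Finset.card_image_of_injOn hinj, Nat.card_Icc]; omega
    have hSsub : (Finset.Icc 1 i).image I ⊆ Finset.Icc 1 (n + 1) := by
      intro m hmI
      obtain ⟨j, hj, rfl⟩ := Finset.mem_image.mp hmI
      have := hI.mapsTo (hsub j hj)
      rw [Set.mem_Icc] at this
      exact Finset.mem_Icc.mpr this
    have hkb := key_bounds (n + 1) v h0 hmv hik hSsub hScard
    have himage : (Finset.Icc 1 i).image (fun j => n + 1 + 1 - j)
        = Finset.Icc (n + 1 + 1 - i) (n + 1) := by
      ext m
      simp only [Finset.mem_image, Finset.mem_Icc]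
      constructor
      · rintro ⟨j, hj, rfl⟩; omega
      · intro hm; exact ⟨n + 1 + 1 - m, by omega, by omega⟩
    have hrev : ∏ j ∈ Finset.Icc 1 i, v (n + 1 + 1 - j)
        = ∏ m ∈ Finset.Icc (n + 1 + 1 - i) (n + 1), v m := by
      rw [← himage]
      exact (Finset.prod_image (by
        intro x hx y hy hxy
        rw [Finset.coe_Icc, Set.mem_Icc] at hx hy
        omega)).symm
    constructor
    · rw [himg]; exact hkb.1
    · rw [himg, hrev]; exact hkb.2
  rw [cascadeMean_eq n u, cascadeMean_eq n (fun i => u (I i)),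
    cascadeMean_eq n (fun i => u (n + 1 + 1 - i))]
  constructor
  · exact Finset.sum_le_sum fun i hi => (hkey i hi).1
  · exact Finset.sum_le_sum fun i hi => (hkey i hi).2
end

section
/- Let X_1, ..., X_n be random variables adapted to a filtration with X_t bounded, E[X_t | F_{t−1}] ≥ μ almost surely, and X_t − E[X_t | F_{t−1}] being v-left-sided-sub-Gaussian conditionally on F_{t−1}. Then for any δ ∈ (0,1), with probability at least 1 − δ, Σ_{t=1}^n X_t ≥ n μ − √(2 n v^2 log(1/δ)). Moreover, on this event, if Σ_{t=1}^n X_t ≤ T for some T > 0, then n ≤ 2T/μ + 2 v^2 log(1/δ)/μ^2. -/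
open MeasureTheory Real

private lemma slb_mgf_bound {Ω : Type*} {m0 : MeasurableSpace Ω}
    (P : Measure Ω) [IsProbabilityMeasure P] (ℱ : Filtration ℕ m0)
    (X : ℕ → Ω → ℝ) (hadp : Adapted ℱ X) (C : ℝ) (hbdd : ∀ t ω, |X t ω| ≤ C)
    (hint : ∀ t, Integrable (X t) P)
    (v : ℝ)
    (hLSG : ∀ t, 1 ≤ t → ∀ l : ℝ, l ≤ 0 →
      P[(fun ω => Real.exp (l * (X t ω - MeasureTheory.condExp (ℱ (t - 1)) P (X t) ω)))|ℱ (t - 1)] ≤ᵐ[P]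
        fun _ => Real.exp (v ^ 2 * l ^ 2 / 2))
    (l : ℝ) (hl : l ≤ 0) :
    ∀ k : ℕ, Integrable (fun ω => Real.exp (l * ∑ t ∈ Finset.Icc 1 k,
        (X t ω - MeasureTheory.condExp (ℱ (t - 1)) P (X t) ω))) P ∧
      ∫ ω, Real.exp (l * ∑ t ∈ Finset.Icc 1 k,
        (X t ω - MeasureTheory.condExp (ℱ (t - 1)) P (X t) ω)) ∂P ≤
      Real.exp (k * (v ^ 2 * l ^ 2 / 2)) := by
  set Y : ℕ → Ω → ℝ := fun t ω => X t ω - MeasureTheory.condExp (ℱ (t - 1)) P (X t) ω with hYdef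
  -- boundedness of Y a.e.
  have hCE_bd : ∀ t : ℕ, ∀ᵐ ω ∂P, |MeasureTheory.condExp (ℱ (t - 1)) P (X t) ω| ≤ C := by
    intro t
    have hub : P[X t|ℱ (t-1)] ≤ᵐ[P] fun _ => C := by
      have h := condExp_mono (m := ℱ (t-1)) (μ := P) (hint t) (integrable_const C)
        (Filter.Eventually.of_forall fun ω => (abs_le.mp (hbdd t ω)).2)
      rwa [condExp_const (ℱ.le (t-1)) C] at h
    have hlb : (fun _ => -C) ≤ᵐ[P] P[X t|ℱ (t-1)] := by
      have h := condExp_mono (m := ℱ (t-1)) (μ := P) (integrable_const (-C)) (hint t)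
        (Filter.Eventually.of_forall fun ω => (abs_le.mp (hbdd t ω)).1)
      rwa [condExp_const (ℱ.le (t-1)) (-C)] at h
    filter_upwards [hub, hlb] with ω h1 h2
    exact abs_le.mpr ⟨h2, h1⟩
  have hYbd : ∀ᵐ ω ∂P, ∀ t : ℕ, |Y t ω| ≤ 2 * C := by
    rw [ae_all_iff]
    intro t
    filter_upwards [hCE_bd t] with ω h
    calc |Y t ω| ≤ |X t ω| + |MeasureTheory.condExp (ℱ (t - 1)) P (X t) ω| := abs_sub _ _
      _ ≤ 2 * C := by have := hbdd t ω; linarith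
  -- measurability
  have hYsm : ∀ t k : ℕ, t ≤ k → StronglyMeasurable[ℱ k] (Y t) := by
    intro t k htk
    exact ((hadp t).mono (ℱ.mono htk) le_rfl).stronglyMeasurable.sub
      (stronglyMeasurable_condExp.mono (ℱ.mono ((Nat.sub_le t 1).trans htk)))
  have hfsm : ∀ k : ℕ, StronglyMeasurable[ℱ k]
      (fun ω => Real.exp (l * ∑ t ∈ Finset.Icc 1 k, Y t ω)) := by
    intro k
    have hs : StronglyMeasurable[ℱ k] (fun ω => ∑ t ∈ Finset.Icc 1 k, Y t ω) :=
      Finset.stronglyMeasurable_fun_sum _ fun t ht =>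
        hYsm t k (Finset.mem_Icc.mp ht).2
    exact Real.continuous_exp.comp_stronglyMeasurable (hs.const_mul l)
  -- integrability of exp(l * partial sums)
  have hfint : ∀ k : ℕ, Integrable (fun ω => Real.exp (l * ∑ t ∈ Finset.Icc 1 k, Y t ω)) P := by
    intro k
    refine Integrable.mono' (integrable_const (Real.exp (|l| * (k * (2 * C))))) 
      ((hfsm k).mono (ℱ.le k)).aestronglyMeasurable ?_
    filter_upwards [hYbd] with ω hω
    rw [Real.norm_eq_abs, abs_of_pos (Real.exp_pos _), Real.exp_le_exp]
    have habs : |∑ t ∈ Finset.Icc 1 k, Y t ω| ≤ k * (2 * C) := by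
      calc |∑ t ∈ Finset.Icc 1 k, Y t ω| ≤ ∑ t ∈ Finset.Icc 1 k, |Y t ω| :=
            Finset.abs_sum_le_sum_abs _ _
        _ ≤ ∑ _t ∈ Finset.Icc 1 k, (2 * C) := Finset.sum_le_sum fun t _ => hω t
        _ = k * (2 * C) := by rw [Finset.sum_const, Nat.card_Icc]; simp
    calc l * ∑ t ∈ Finset.Icc 1 k, Y t ω ≤ |l * ∑ t ∈ Finset.Icc 1 k, Y t ω| := le_abs_self _
      _ = |l| * |∑ t ∈ Finset.Icc 1 k, Y t ω| := abs_mul _ _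
      _ ≤ |l| * (k * (2 * C)) := by
          exact mul_le_mul_of_nonneg_left habs (abs_nonneg l)
  have hgint : ∀ t : ℕ, Integrable (fun ω => Real.exp (l * Y t ω)) P := by
    intro t
    refine Integrable.mono' (integrable_const (Real.exp (|l| * (2 * C))))
      (Real.continuous_exp.comp_stronglyMeasurable
        (((hYsm t t le_rfl).mono (ℱ.le t)).const_mul l)).aestronglyMeasurable ?_
    filter_upwards [hYbd] with ω hω
    rw [Real.norm_eq_abs, abs_of_pos (Real.exp_pos _), Real.exp_le_exp]
    calc l * Y t ω ≤ |l * Y t ω| := le_abs_self _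
      _ = |l| * |Y t ω| := abs_mul _ _
      _ ≤ |l| * (2 * C) := mul_le_mul_of_nonneg_left (hω t) (abs_nonneg l)
  -- induction
  intro k
  refine ⟨hfint k, ?_⟩
  induction k with
  | zero => simp
  | succ k ih =>
    have hsplit : ∀ ω, (∑ t ∈ Finset.Icc 1 (k+1), Y t ω) =
        (∑ t ∈ Finset.Icc 1 k, Y t ω) + Y (k+1) ω := fun ω =>
      Finset.sum_Icc_succ_top (Nat.succ_le_succ (Nat.zero_le k)) _
    set f : Ω → ℝ := fun ω => Real.exp (l * ∑ t ∈ Finset.Icc 1 k, Y t ω) with hfdef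
    set g : Ω → ℝ := fun ω => Real.exp (l * Y (k+1) ω) with hgdef
    have hfg : (fun ω => Real.exp (l * ∑ t ∈ Finset.Icc 1 (k+1), Y t ω)) = f * g := by
      funext ω
      simp only [hsplit ω, Pi.mul_apply, hfdef, hgdef, mul_add, Real.exp_add]
    rw [hfg]
    have hfgint : Integrable (f * g) P := by rw [← hfg]; exact hfint (k+1)
    have hpull : P[f * g|ℱ k] =ᵐ[P] f * P[g|ℱ k] :=
      condExp_mul_of_stronglyMeasurable_left (hfsm k) hfgint (hgint (k+1))
    have hcond : P[g|ℱ k] ≤ᵐ[P] fun _ => Real.exp (v ^ 2 * l ^ 2 / 2) :=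
      hLSG (k+1) (Nat.succ_le_succ (Nat.zero_le k)) l hl
    have step1 : ∫ ω, (f * g) ω ∂P = ∫ ω, (P[f * g|ℱ k]) ω ∂P :=
      (integral_condExp (ℱ.le k)).symm
    have step2 : ∫ ω, (P[f * g|ℱ k]) ω ∂P ≤
        ∫ ω, f ω * Real.exp (v ^ 2 * l ^ 2 / 2) ∂P := by
      refine integral_mono_ae integrable_condExp ((hfint k).mul_const _) ?_
      filter_upwards [hpull, hcond] with ω h1 h2
      rw [h1]
      exact mul_le_mul_of_nonneg_left h2 (Real.exp_pos _).le
    have step3 : ∫ ω, f ω * Real.exp (v ^ 2 * l ^ 2 / 2) ∂P ≤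
        Real.exp (k * (v ^ 2 * l ^ 2 / 2)) * Real.exp (v ^ 2 * l ^ 2 / 2) := by
      rw [integral_mul_const]
      exact mul_le_mul_of_nonneg_right ih (Real.exp_pos _).le
    calc ∫ ω, (f * g) ω ∂P ≤ Real.exp (k * (v ^ 2 * l ^ 2 / 2)) * Real.exp (v ^ 2 * l ^ 2 / 2) := by
          rw [step1]; exact step2.trans step3
      _ = Real.exp ((k+1 : ℕ) * (v ^ 2 * l ^ 2 / 2)) := by
          rw [← Real.exp_add]; push_cast; ring_nf

/-- For adapted, bounded `X_t` with conditional mean at least `μc` and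
conditionally `v`-left-sided-sub-Gaussian fluctuations, with probability at least
`1 − δ` we have `Σ_{t=1}^n X_t ≥ n μc − √(2 n v^2 log(1/δ))`; moreover, whenever the
latter lower bound holds and `Σ_{t=1}^n X_t ≤ T` for some `T > 0`, then
`n ≤ 2T/μc + 2 v^2 log(1/δ)/μc^2`. -/
theorem sum_lower_bound_left_sided_subgaussian {Ω : Type*} {m0 : MeasurableSpace Ω}
    (P : Measure Ω) [IsProbabilityMeasure P] (ℱ : Filtration ℕ m0)
    (X : ℕ → Ω → ℝ) (hadp : Adapted ℱ X) (C : ℝ) (hbdd : ∀ t ω, |X t ω| ≤ C)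
    (hint : ∀ t, Integrable (X t) P)
    (μc v : ℝ) (hμc : 0 < μc) (hv : 0 < v)
    (hmean : ∀ t, 1 ≤ t → (fun _ => μc) ≤ᵐ[P] P[X t|ℱ (t - 1)])
    (hLSG : ∀ t, 1 ≤ t → ∀ l : ℝ, l ≤ 0 →
      P[(fun ω => Real.exp (l * (X t ω - MeasureTheory.condExp (ℱ (t - 1)) P (X t) ω)))|ℱ (t - 1)] ≤ᵐ[P]
        fun _ => Real.exp (v ^ 2 * l ^ 2 / 2))
    (n : ℕ) (hn : 1 ≤ n) (δ : ℝ) (hδ : δ ∈ Set.Ioo (0 : ℝ) 1) :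
    (1 - δ ≤ (P {ω | (n : ℝ) * μc - Real.sqrt (2 * n * v ^ 2 * Real.log (1 / δ)) ≤
        ∑ t ∈ Finset.Icc 1 n, X t ω}).toReal) ∧
      ∀ ω : Ω, ∀ T : ℝ, 0 < T →
        (n : ℝ) * μc - Real.sqrt (2 * n * v ^ 2 * Real.log (1 / δ)) ≤
            ∑ t ∈ Finset.Icc 1 n, X t ω →
          (∑ t ∈ Finset.Icc 1 n, X t ω) ≤ T →
          (n : ℝ) ≤ 2 * T / μc + 2 * v ^ 2 * Real.log (1 / δ) / μc ^ 2 := by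
  set L := Real.log (1 / δ) with hLdef
  set c := Real.sqrt (2 * n * v ^ 2 * L) with hcdef
  have hL0 : 0 < L := Real.log_pos (one_lt_one_div hδ.1 hδ.2)
  have hn1 : (1:ℝ) ≤ (n:ℝ) := by exact_mod_cast hn
  have hnpos : (0:ℝ) < (n:ℝ) := by linarith
  have hc0 : 0 < c := Real.sqrt_pos.mpr (by positivity)
  have hc2 : c ^ 2 = 2 * n * v ^ 2 * L := Real.sq_sqrt (by positivity)
  constructor
  · -- probabilistic part
    set l : ℝ := -(c / (n * v ^ 2)) with hldef
    have hnv2 : (0:ℝ) < (n:ℝ) * v ^ 2 := by positivity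
    have hl : l ≤ 0 := by
      rw [hldef]
      simp only [neg_nonpos]
      positivity
    obtain ⟨hZint, hZbd⟩ := slb_mgf_bound P ℱ X hadp C hbdd hint v hLSG l hl n
    set Z : Ω → ℝ := fun ω => ∑ t ∈ Finset.Icc 1 n,
      (X t ω - MeasureTheory.condExp (ℱ (t - 1)) P (X t) ω) with hZdef
    have hcher := ProbabilityTheory.measure_le_le_exp_mul_mgf (X := Z) (μ := P) (t := l)
      (-c) hl hZint
    have hmgf : ProbabilityTheory.mgf Z P l = ∫ ω, Real.exp (l * Z ω) ∂P := rfl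
    have harith1 : l * c = -(2 * L) := by
      rw [hldef]
      field_simp
      nlinarith [hc2]
    have harith2 : (n:ℝ) * (v ^ 2 * l ^ 2 / 2) = L := by
      rw [hldef]
      field_simp
      nlinarith [hc2]
    have hBbd : (P {ω | Z ω ≤ -c}).toReal ≤ δ := by
      refine hcher.trans ?_
      calc Real.exp (-l * -c) * ProbabilityTheory.mgf Z P l
          ≤ Real.exp (-l * -c) * Real.exp ((n:ℝ) * (v ^ 2 * l ^ 2 / 2)) := by
            rw [hmgf]
            exact mul_le_mul_of_nonneg_left hZbd (Real.exp_pos _).le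
        _ = Real.exp (l * c + (n:ℝ) * (v ^ 2 * l ^ 2 / 2)) := by
            rw [← Real.exp_add]; ring_nf
        _ = δ := by
            rw [harith1, harith2]
            have : -(2 * L) + L = -L := by ring
            rw [this, hLdef, one_div, Real.log_inv, neg_neg, Real.exp_log hδ.1]
    -- the target event
    set A : Set Ω := {ω | (n : ℝ) * μc - c ≤ ∑ t ∈ Finset.Icc 1 n, X t ω} with hAdef
    have hAmeas : MeasurableSet A := by
      refine measurableSet_le measurable_const ?_
      exact Finset.measurable_sum _ fun t _ => ((hadp t).mono (ℱ.le t) le_rfl)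
    have hms : ∀ᵐ ω ∂P, ∀ t : ℕ, 1 ≤ t → μc ≤ (P[X t|ℱ (t - 1)]) ω := by
      rw [ae_all_iff]
      intro t
      by_cases ht : 1 ≤ t
      · filter_upwards [hmean t ht] with ω h using fun _ => h
      · exact Filter.Eventually.of_forall fun ω h => absurd h ht
    have hsub : Aᶜ ≤ᵐ[P] {ω | Z ω ≤ -c} := by
      filter_upwards [hms] with ω hω hmem
      have hlt : ∑ t ∈ Finset.Icc 1 n, X t ω < (n : ℝ) * μc - c :=
        not_le.mp hmem
      have hsum : (n:ℝ) * μc ≤ ∑ t ∈ Finset.Icc 1 n, (P[X t|ℱ (t - 1)]) ω := by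
        calc (n:ℝ) * μc = ∑ _t ∈ Finset.Icc 1 n, μc := by
              rw [Finset.sum_const, Nat.card_Icc]
              simp [mul_comm]
          _ ≤ ∑ t ∈ Finset.Icc 1 n, (P[X t|ℱ (t - 1)]) ω :=
              Finset.sum_le_sum fun t ht => hω t (Finset.mem_Icc.mp ht).1
      have hZeq : Z ω = (∑ t ∈ Finset.Icc 1 n, X t ω) -
          ∑ t ∈ Finset.Icc 1 n, (P[X t|ℱ (t - 1)]) ω := by
        rw [hZdef]
        exact Finset.sum_sub_distrib _ _
      show Z ω ≤ -c
      rw [hZeq]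
      linarith
    have hAc : (P Aᶜ).toReal ≤ δ := by
      refine le_trans ?_ hBbd
      exact ENNReal.toReal_mono (measure_ne_top _ _) (measure_mono_ae hsub)
    have hsum1 : (P A).toReal + (P Aᶜ).toReal = 1 := by
      rw [← ENNReal.toReal_add (measure_ne_top _ _) (measure_ne_top _ _),
        measure_add_measure_compl hAmeas, measure_univ, ENNReal.toReal_one]
    linarith
  · -- deterministic part
    intro ω T hT h1 h2
    have hc0' : 0 ≤ c := hc0.le
    have key : (n:ℝ) * μc ^ 2 ≤ 2 * T * μc + 2 * v ^ 2 * L := by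
      have hnT : (n:ℝ) * μc - T ≤ c := by linarith
      rcases le_or_gt ((n:ℝ) * μc) T with h | h
      · nlinarith
      · have hsq : ((n:ℝ) * μc - T) ^ 2 ≤ c ^ 2 := by nlinarith
        nlinarith [sq_nonneg T, mul_pos hT hμc]
    have heq : 2 * T / μc + 2 * v ^ 2 * L / μc ^ 2 = (2 * T * μc + 2 * v ^ 2 * L) / μc ^ 2 := by
      field_simp
    rw [heq, le_div_iff₀ (by positivity)]
    linarith
end

section
/- For every x ∈ (0, 1), KL(1−x, x) ≥ log(1/(2.4 x)), where KL(p,q) denotes the Bernoulli KL divergence. -/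
/-!
Since `log (1/(2.4 x)) = -log 2.4 - log x` and `KL(1-x, x) = (1-2x)(log(1-x) - log x)`, the claim
says `2x log x + (1-2x) log(1-x) ≥ -log 2.4`; the left side has minimum `≈ -0.8681` near
`x = 0.33`, while `log 2.4 > 7/8`. For `x ≥ 1/2` the bound `x log x ≥ (1 - log 2) x - 1/2` suffices.
For `x ≤ 1/2`, multiplying by `1 - x` turns the left side into a combination of `y log y` at
`y = x` and `y = 1 - x` with nonnegative coefficients; bounding each by its tangent at
`8/25`, resp. `17/25`, leaves a quadratic in `x` with negative discriminant.
-/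

open Real

namespace Real

lemma div_le_log_of_exp_one_pow_le {q : ℝ} {p m : ℕ} (hm : 0 < m) (h : exp 1 ^ p ≤ q ^ m) :
    (p / m : ℝ) ≤ log q := by
  have := log_le_log (by positivity) h
  rw [log_pow, log_pow, log_exp] at this
  rw [div_le_iff₀ (by positivity)]
  linarith

lemma neg_div_le_log_of_inv_pow_le_exp_one_pow {q : ℝ} {p m : ℕ} (hq : 0 < q) (hm : 0 < m)
    (h : q⁻¹ ^ m ≤ exp 1 ^ p) : -(p / m : ℝ) ≤ log q := by
  have := log_le_log (by positivity) h
  rw [log_pow, log_pow, log_exp, log_inv] at this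
  have : -log q ≤ p / m := by
    rw [le_div_iff₀ (by positivity)]
    linarith
  linarith

lemma add_one_mul_sub_le_mul_log {a c y : ℝ} (hc : 0 < c) (hy : 0 < y) (ha : a ≤ log c) :
    (a + 1) * y - c ≤ y * log y := by
  have h := log_le_sub_one_of_pos (div_pos hc hy)
  rw [log_div hc.ne' hy.ne'] at h
  have hcy : y * (c / y) = c := by field_simp
  nlinarith

end Real

lemma neg_seven_div_eight_le_of_half_le {x : ℝ} (hx : 1 / 2 ≤ x) (hx1 : x < 1) :
    -(7 / 8) ≤ 2 * (x * log x) + (1 - 2 * x) * log (1 - x) := by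
  have htangent : (-log 2 + 1) * x - 1 / 2 ≤ x * log x :=
    add_one_mul_sub_le_mul_log (by norm_num) (by linarith) (by simp [log_inv])
  have hlog_one_sub : log (1 - x) ≤ 0 := log_nonpos (by linarith) (by linarith)
  have hcross : 0 ≤ (1 - 2 * x) * log (1 - x) :=
    mul_nonneg_of_nonpos_of_nonpos (by linarith) hlog_one_sub
  nlinarith [log_two_lt_d9]

lemma neg_seven_div_eight_le_of_le_half {x : ℝ} (hx0 : 0 < x) (hx : x ≤ 1 / 2) :
    -(7 / 8) ≤ 2 * (x * log x) + (1 - 2 * x) * log (1 - x) := by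
  have hlog_high : -((17 : ℕ) / (44 : ℕ) : ℝ) ≤ log (17 / 25) :=
    neg_div_le_log_of_inv_pow_le_exp_one_pow (by norm_num) (by norm_num)
      ((by norm_num : (17 / 25 : ℝ)⁻¹ ^ 44 ≤ 2.7182818283 ^ 17).trans
        (pow_le_pow_left₀ (by norm_num) exp_one_gt_d9.le 17))
  have hlog_low : -((57 : ℕ) / (50 : ℕ) : ℝ) ≤ log (8 / 25) :=
    neg_div_le_log_of_inv_pow_le_exp_one_pow (by norm_num) (by norm_num)
      ((by norm_num : (8 / 25 : ℝ)⁻¹ ^ 50 ≤ 2.7182818283 ^ 57).trans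
        (pow_le_pow_left₀ (by norm_num) exp_one_gt_d9.le 57))
  have h1x : 0 < 1 - x := by linarith
  have hx_tangent := add_one_mul_sub_le_mul_log (by norm_num) hx0 hlog_low
  have hx1_tangent := add_one_mul_sub_le_mul_log (by norm_num) h1x hlog_high
  have hscaled : 0 ≤ (1 - x) * (2 * (x * log x) + (1 - 2 * x) * log (1 - x) + 7 / 8) := by
    nlinarith [mul_le_mul_of_nonneg_left hx_tangent (by linarith : (0 : ℝ) ≤ 2 * (1 - x)),
      mul_le_mul_of_nonneg_left hx1_tangent (by linarith : (0 : ℝ) ≤ 1 - 2 * x),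
      sq_nonneg (x - 1 / 3)]
  linarith [(mul_nonneg_iff_of_pos_left h1x).1 hscaled]

/-- For `x ∈ (0,1)`, `KL(1−x, x) ≥ log(1/(2.4 x))` for the Bernoulli KL
divergence. -/
theorem bernoulli_kl_lower_bound (x : ℝ) (hx : x ∈ Set.Ioo (0 : ℝ) 1) :
    Real.log (1 / (2.4 * x)) ≤
      (1 - x) * Real.log ((1 - x) / x) + x * Real.log (x / (1 - x)) := by
  obtain ⟨hx0, hx1⟩ := hx
  have h1x : 0 < 1 - x := by linarith
  have hmin : -(7 / 8) ≤ 2 * (x * log x) + (1 - 2 * x) * log (1 - x) := by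
    rcases le_total x (1 / 2) with hx_le | hx_ge
    · exact neg_seven_div_eight_le_of_le_half hx0 hx_le
    · exact neg_seven_div_eight_le_of_half_le hx_ge hx1
  have hlog : (7 / 8 : ℝ) ≤ log 2.4 := by
    have := div_le_log_of_exp_one_pow_le (q := 2.4) (p := 7) (m := 8) (by norm_num)
      ((pow_le_pow_left₀ (exp_pos 1).le exp_one_lt_d9.le 7).trans (by norm_num))
    norm_num at this ⊢
    linarith
  rw [log_div one_ne_zero (by positivity), log_mul (by norm_num) hx0.ne', log_one,
    log_div h1x.ne' hx0.ne', log_div hx0.ne' h1x.ne']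
  linarith
end
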